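/- arXiv:2109.12620 — 3 statements merged into one kernel-verified Lean document; each statement's English description precedes it below -/
import Mathlib

section
/- Let S̄ = (S_0,…,S_n) and T̄ = (T_0,…,T_n) be n-slices of the finite group G. There exists a family of G-equivariant bijections (μ_i : G/S_i → G/T_i)_{0≤i≤n} commuting with the natural projections G/S_{i-1} → G/S_i and G/T_{i-1} → G/T_i if and only if S̄ and T̄ are conjugate, i.e. there exists g ∈ G with gS_ig⁻¹ = T_i for all i = 0,…,n. -/
variable {G : Type*}

/-- The conjugate slice `ᵍS̄ = (gS₀g⁻¹, …, gSₙg⁻¹)`. -/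
def sliceConj [Group G] {n : ℕ} (g : G) (S : Fin (n + 1) → Subgroup G) :
    Fin (n + 1) → Subgroup G :=
  fun i => (S i).map (MulAut.conj g).toMonoidHom

/-- Natural projection `G/H → G/K` for `H ≤ K`. -/
def cosetProj [Group G] {H K : Subgroup G} (h : H ≤ K) : G ⧸ H → G ⧸ K :=
  Quotient.map' id fun a b hab => by
    rw [QuotientGroup.leftRel_apply] at hab ⊢
    exact h hab

/-! An equivariant bijection `μ : G/H → G/K` preserves stabilizers, so `H` is the stabilizer of
`μ(1·H) = c·K`, namely `cKc⁻¹`. Compatibility with the projections forces all the `μᵢ(1·Sᵢ)` to be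
images of `μ₀(1·S₀) = c·T₀`, so one `c` works for every `i`. Conversely, if `gHg⁻¹ = K` then
`xH ↦ xg⁻¹K` is such a bijection, and it visibly commutes with the projections. -/

open MulAction

section

variable [Group G]

theorem stabilizer_apply_eq_of_injective {α β : Type*} [MulAction G α] [MulAction G β]
    {f : α → β} (hf : Function.Injective f) (hsmul : ∀ (g : G) (a : α), f (g • a) = g • f a)
    (a : α) : stabilizer G (f a) = stabilizer G a := by
  ext g
  rw [mem_stabilizer_iff, mem_stabilizer_iff, ← hsmul, hf.eq_iff]

theorem Subgroup.map_conj_inv_eq_of_equivariant {H K : Subgroup G} (μ : G ⧸ H ≃ G ⧸ K)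
    (hμ : ∀ (g : G) (y : G ⧸ H), μ (g • y) = g • μ y) {c : G}
    (hc : μ ((1 : G) : G ⧸ H) = (c : G ⧸ K)) : H.map (MulAut.conj c⁻¹).toMonoidHom = K :=
  calc H.map (MulAut.conj c⁻¹).toMonoidHom
      = (stabilizer G (μ ((1 : G) : G ⧸ H))).map (MulAut.conj c⁻¹).toMonoidHom := by
        rw [stabilizer_apply_eq_of_injective μ.injective hμ, stabilizer_quotient]
    _ = stabilizer G (c⁻¹ • μ ((1 : G) : G ⧸ H)) :=
        (stabilizer_smul_eq_stabilizer_map_conj _ _).symm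
    _ = K := by
        rw [hc, MulAction.Quotient.smul_mk, smul_eq_mul, inv_mul_cancel, stabilizer_quotient]

theorem cosetProj_mk {H K : Subgroup G} (h : H ≤ K) (x : G) :
    cosetProj h (x : G ⧸ H) = (x : G ⧸ K) := rfl

theorem cosetProj_cosetProj {H K L : Subgroup G} (hHK : H ≤ K) (hKL : K ≤ L) (y : G ⧸ H) :
    cosetProj hKL (cosetProj hHK y) = cosetProj (hHK.trans hKL) y := by
  induction y using QuotientGroup.induction_on with
  | H x => rfl

def cosetConjEquiv (g : G) {H K : Subgroup G} (h : H.map (MulAut.conj g).toMonoidHom = K) :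
    G ⧸ H ≃ G ⧸ K :=
  Quotient.congr (Equiv.mulRight g⁻¹) fun a b => by
    rw [QuotientGroup.leftRel_apply, QuotientGroup.leftRel_apply, ← h, Subgroup.mem_map_equiv,
      MulAut.conj_symm_apply]
    simp [mul_assoc]

theorem cosetConjEquiv_mk (g : G) {H K : Subgroup G}
    (h : H.map (MulAut.conj g).toMonoidHom = K) (x : G) :
    cosetConjEquiv g h (x : G ⧸ H) = ((x * g⁻¹ : G) : G ⧸ K) := rfl

theorem cosetConjEquiv_smul (g : G) {H K : Subgroup G}
    (h : H.map (MulAut.conj g).toMonoidHom = K) (a : G) (y : G ⧸ H) :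
    cosetConjEquiv g h (a • y) = a • cosetConjEquiv g h y := by
  induction y using QuotientGroup.induction_on with
  | H x => simp only [MulAction.Quotient.smul_mk, cosetConjEquiv_mk, smul_eq_mul, mul_assoc]

theorem cosetConjEquiv_comp_cosetProj (g : G) {H H' K K' : Subgroup G}
    (h : H.map (MulAut.conj g).toMonoidHom = K) (h' : H'.map (MulAut.conj g).toMonoidHom = K')
    (hH : H ≤ H') (hK : K ≤ K') :
    cosetConjEquiv g h' ∘ cosetProj hH = cosetProj hK ∘ cosetConjEquiv g h := by
  funext y
  induction y using QuotientGroup.induction_on with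
  | H x => rfl

theorem apply_one_eq_cosetProj_apply_zero {n : ℕ} {S T : Fin (n + 1) → Subgroup G}
    (hS : Monotone S) (hT : Monotone T) (μ : ∀ i, G ⧸ S i → G ⧸ T i)
    (hμ : ∀ i : Fin n,
      μ i.succ ∘ cosetProj (hS (Fin.castSucc_lt_succ : i.castSucc < i.succ).le) =
        cosetProj (hT (Fin.castSucc_lt_succ : i.castSucc < i.succ).le) ∘ μ i.castSucc)
    (i : Fin (n + 1)) :
    μ i ((1 : G) : G ⧸ S i) = cosetProj (hT (Fin.zero_le i)) (μ 0 ((1 : G) : G ⧸ S 0)) := by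
  induction i using Fin.induction with
  | zero => induction μ 0 ((1 : G) : G ⧸ S 0) using QuotientGroup.induction_on with
    | H x => rfl
  | succ i ih =>
    rw [← cosetProj_mk (hS (Fin.castSucc_lt_succ : i.castSucc < i.succ).le),
      ← Function.comp_apply (f := μ i.succ), hμ i, Function.comp_apply, ih, cosetProj_cosetProj]

end

theorem iso_iff_conjugate_general {n : ℕ} [Group G]
    (S T : Fin (n + 1) → Subgroup G) (hS : Monotone S) (hT : Monotone T) :
    (∃ μ : ∀ i : Fin (n + 1), G ⧸ S i ≃ G ⧸ T i,
        (∀ (i : Fin (n + 1)) (g : G) (y : G ⧸ S i), μ i (g • y) = g • μ i y) ∧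
        ∀ i : Fin n,
          (μ i.succ) ∘ cosetProj (hS (Fin.castSucc_lt_succ : i.castSucc < i.succ).le) =
            cosetProj (hT (Fin.castSucc_lt_succ : i.castSucc < i.succ).le) ∘ (μ i.castSucc)) ↔
      ∃ g : G, ∀ i, sliceConj g S i = T i := by
  constructor
  · rintro ⟨μ, hμ, hproj⟩
    obtain ⟨c, hc⟩ := QuotientGroup.mk_surjective (μ 0 ((1 : G) : G ⧸ S 0))
    refine ⟨c⁻¹, fun i => Subgroup.map_conj_inv_eq_of_equivariant (μ i) (hμ i) ?_⟩
    rw [apply_one_eq_cosetProj_apply_zero hS hT (fun i => μ i) hproj i, ← hc, cosetProj_mk]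
  · rintro ⟨g, hg⟩
    exact ⟨fun i => cosetConjEquiv g (hg i), fun i => cosetConjEquiv_smul g (hg i),
      fun i => cosetConjEquiv_comp_cosetProj g _ _ _ _⟩

/-- there exists a family of `G`-equivariant bijections
`(μᵢ : G/Sᵢ → G/Tᵢ)` commuting with the natural projections if and only if the
slices `S̄` and `T̄` are conjugate in `G`. -/
theorem iso_iff_conjugate {n : ℕ} [Group G] [Finite G]
    (S T : Fin (n + 1) → Subgroup G) (hS : Monotone S) (hT : Monotone T) :
    (∃ μ : ∀ i : Fin (n + 1), G ⧸ S i ≃ G ⧸ T i,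
        (∀ (i : Fin (n + 1)) (g : G) (y : G ⧸ S i), μ i (g • y) = g • μ i y) ∧
        ∀ i : Fin n,
          (μ i.succ) ∘ cosetProj (hS (Fin.castSucc_lt_succ : i.castSucc < i.succ).le) =
            cosetProj (hT (Fin.castSucc_lt_succ : i.castSucc < i.succ).le) ∘ (μ i.castSucc)) ↔
      ∃ g : G, ∀ i, sliceConj g S i = T i :=
  iso_iff_conjugate_general S T hS hT
end

section
/- Let S̄ and T̄ be n-slices of the finite group G. Then φ_{S̄}(X) ≤ φ_{T̄}(X) for every chain of finite G-sets X of length n if and only if T̄ ⪯_G S̄ (i.e. there exists g ∈ G with T_i ≤ gS_ig⁻¹ for all i). In particular, φ_{S̄}(X) = φ_{T̄}(X) for every such chain X if and only if S̄ and T̄ are conjugate in G. -/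
variable {G : Type*}

/-- Composite map `X₀ → Xᵢ` of a chain of `G`-sets. -/
def chainComp (X : ℕ → Type) (f : ∀ i, X i → X (i + 1)) : ∀ i, X 0 → X i
  | 0 => id
  | i + 1 => f i ∘ chainComp X f i

/-- The invariant set `Inv_{S̄}(X)`. -/
def sliceInv [Group G] {n : ℕ} (S : Fin (n + 1) → Subgroup G)
    (X : ℕ → Type) [∀ i, MulAction G (X i)] (f : ∀ i, X i → X (i + 1)) :
    Set (X 0) :=
  {x | ∀ i : Fin (n + 1), ∀ s ∈ S i, s • chainComp X f i x = chainComp X f i x}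

/-- `φ_{S̄}(X) = |Inv_{S̄}(X)|`. -/
noncomputable def phiSlice [Group G] {n : ℕ} (S : Fin (n + 1) → Subgroup G)
    (X : ℕ → Type) [∀ i, MulAction G (X i)] (f : ∀ i, X i → X (i + 1)) : ℕ :=
  Nat.card (sliceInv S X f)

section Aux
variable [Group G]

lemma mem_sliceConj_iff {n : ℕ} (g : G) (S : Fin (n + 1) → Subgroup G)
    (i : Fin (n + 1)) (t : G) :
    t ∈ sliceConj g S i ↔ g⁻¹ * t * g ∈ S i := by
  simp only [sliceConj, Subgroup.mem_map, MulEquiv.coe_toMonoidHom, MulAut.conj_apply]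
  constructor
  · rintro ⟨u, hu, rfl⟩
    have : g⁻¹ * (g * u * g⁻¹) * g = u := by group
    rwa [this]
  · intro h
    exact ⟨g⁻¹ * t * g, h, by group⟩

lemma chainComp_smul {X : ℕ → Type} [∀ i, MulAction G (X i)]
    {f : ∀ i, X i → X (i + 1)}
    (hf : ∀ (i : ℕ) (g : G) (x : X i), f i (g • x) = g • f i x)
    (i : ℕ) (g : G) (x : X 0) :
    chainComp X f i (g • x) = g • chainComp X f i x := by
  induction i with
  | zero => rfl
  | succ i ih => simp only [chainComp, Function.comp_apply, ih, hf]

lemma phi_mono {n : ℕ} (S T : Fin (n + 1) → Subgroup G)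
    (g : G) (hg : ∀ i, T i ≤ sliceConj g S i)
    (X : ℕ → Type) [∀ i, Fintype (X i)] [∀ i, MulAction G (X i)]
    (f : ∀ i, X i → X (i + 1))
    (hf : ∀ (i : ℕ) (g : G) (x : X i), f i (g • x) = g • f i x) :
    phiSlice S X f ≤ phiSlice T X f := by
  have key : ∀ x ∈ sliceInv S X f, g • x ∈ sliceInv T X f := by
    intro x hx i t ht
    obtain ⟨s, hs, rfl⟩ := hg i ht
    rw [chainComp_smul hf, MulEquiv.coe_toMonoidHom, MulAut.conj_apply,
      smul_smul]
    have : g * s * g⁻¹ * g = g * s := by group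
    rw [this, mul_smul, hx i s hs]
  exact Nat.card_le_card_of_injective
    (fun x : sliceInv S X f => (⟨g • x.1, key x.1 x.2⟩ : sliceInv T X f))
    (fun a b hab => Subtype.ext (smul_left_cancel g (congrArg Subtype.val hab)))

end Aux

section Main
variable [Group G]

lemma exists_subconj [Finite G] {n : ℕ} (S T : Fin (n + 1) → Subgroup G) (hS : Monotone S)
    (h : ∀ (X : ℕ → Type) (_ : ∀ i, Fintype (X i)) (_ : ∀ i, MulAction G (X i))
        (f : ∀ i, X i → X (i + 1)),
        (∀ (i : ℕ) (g : G) (x : X i), f i (g • x) = g • f i x) →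
        phiSlice S X f ≤ phiSlice T X f) :
    ∃ g : G, ∀ i, T i ≤ sliceConj g S i := by
  classical
  set K : ℕ → Subgroup G := fun i => S ⟨min i n, Nat.lt_succ_of_le (min_le_right _ _)⟩
    with hKdef
  have hK : ∀ i, K i ≤ K (i + 1) := by
    intro i
    apply hS
    rw [Fin.mk_le_mk]
    omega
  haveI hfinq : ∀ i, Finite (G ⧸ K i) := fun i => Quotient.finite _
  let e : ∀ i, G ⧸ K i ≃ Fin (Nat.card (G ⧸ K i)) := fun i => Finite.equivFin _
  let X : ℕ → Type := fun i => Fin (Nat.card (G ⧸ K i))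
  let fY : ∀ i, G ⧸ K i → G ⧸ K (i + 1) := fun i =>
    Quotient.map' id fun a b hab => by
      rw [QuotientGroup.leftRel_apply] at hab ⊢
      exact hK i hab
  have fY_mk : ∀ (i : ℕ) (a : G), fY i (QuotientGroup.mk a) = QuotientGroup.mk a :=
    fun i a => rfl
  have fY_smul : ∀ (i : ℕ) (g : G) (y : G ⧸ K i), fY i (g • y) = g • fY i y := by
    intro i g y
    induction y using Quotient.inductionOn' with
    | h a =>
      show fY i (g • QuotientGroup.mk a) = g • fY i (QuotientGroup.mk a)
      rw [MulAction.Quotient.smul_mk, fY_mk, fY_mk, MulAction.Quotient.smul_mk]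
  letI instA : ∀ i, MulAction G (X i) := fun i =>
    { smul := fun g x => e i (g • (e i).symm x)
      one_smul := fun x => by
        show e i ((1 : G) • (e i).symm x) = x
        rw [one_smul, Equiv.apply_symm_apply]
      mul_smul := fun g g' x => by
        show e i ((g * g') • (e i).symm x) = e i (g • (e i).symm (e i (g' • (e i).symm x)))
        rw [Equiv.symm_apply_apply, mul_smul] }
  have smul_def : ∀ (i : ℕ) (g : G) (x : X i), g • x = e i (g • (e i).symm x) :=
    fun _ _ _ => rfl
  let fX : ∀ i, X i → X (i + 1) := fun i x => e (i + 1) (fY i ((e i).symm x))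
  have hfX : ∀ (i : ℕ) (g : G) (x : X i), fX i (g • x) = g • fX i x := by
    intro i g x
    rw [smul_def, smul_def]
    show e (i + 1) (fY i ((e i).symm (e i (g • (e i).symm x))))
        = e (i + 1) (g • (e (i + 1)).symm (e (i + 1) (fY i ((e i).symm x))))
    rw [Equiv.symm_apply_apply, Equiv.symm_apply_apply, fY_smul]
  have hcomp : ∀ (j : ℕ) (a : G),
      chainComp X fX j (e 0 (QuotientGroup.mk a)) = e j (QuotientGroup.mk a) := by
    intro j a
    induction j with
    | zero => rfl
    | succ j ih =>
      show fX j (chainComp X fX j (e 0 (QuotientGroup.mk a))) = _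
      rw [ih]
      show e (j + 1) (fY j ((e j).symm (e j _))) = _
      rw [Equiv.symm_apply_apply, fY_mk]
  have hK_eq : ∀ i : Fin (n + 1), K (i : ℕ) = S i := fun i =>
    congrArg S (Fin.ext (Nat.min_eq_left i.is_le))
  have inv_trick : ∀ (H : Subgroup G) (a s : G), (s * a)⁻¹ * a ∈ H ↔ a⁻¹ * s * a ∈ H := by
    intro H a s
    rw [show (s * a)⁻¹ * a = (a⁻¹ * s * a)⁻¹ by group]
    exact inv_mem_iff
  have hfix : ∀ (i : Fin (n + 1)) (a s : G),
      s • chainComp X fX i (e 0 (QuotientGroup.mk a))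
        = chainComp X fX i (e 0 (QuotientGroup.mk a)) ↔ s ∈ sliceConj a S i := by
    intro i a s
    rw [hcomp, smul_def, Equiv.symm_apply_apply, Equiv.apply_eq_iff_eq,
      MulAction.Quotient.smul_mk, QuotientGroup.eq, mem_sliceConj_iff, ← hK_eq i]
    exact inv_trick _ _ _
  have hmemS : e 0 (QuotientGroup.mk 1) ∈ sliceInv S X fX := by
    intro i s hs
    rw [hfix, mem_sliceConj_iff]
    simpa using hs
  have hle := h X (fun i => inferInstance) instA fX hfX
  have hposS : 0 < phiSlice S X fX := by
    have : Nonempty (sliceInv S X fX) := ⟨⟨_, hmemS⟩⟩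
    exact Nat.card_pos
  have hposT : 0 < phiSlice T X fX := lt_of_lt_of_le hposS hle
  obtain ⟨⟨⟨x, hx⟩⟩, -⟩ := Nat.card_pos_iff.mp hposT
  obtain ⟨a, ha⟩ := QuotientGroup.mk_surjective ((e 0).symm x)
  have hx' : x = e 0 (QuotientGroup.mk a) := by
    rw [ha, Equiv.apply_symm_apply]
  refine ⟨a, fun i t ht => ?_⟩
  have := hx i t ht
  rw [hx'] at this
  exact (hfix i a t).mp this

end Main

/-- `φ_{S̄}(X) ≤ φ_{T̄}(X)` for every chain of finite `G`-sets `X`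
iff `T̄ ⪯_G S̄`; in particular `φ_{S̄}(X) = φ_{T̄}(X)` for every chain `X` iff
`S̄` and `T̄` are conjugate in `G`. -/
theorem phi_le_iff_subconjugate {n : ℕ} [Group G] [Finite G]
    (S T : Fin (n + 1) → Subgroup G) (hS : Monotone S) (hT : Monotone T) :
    ((∀ (X : ℕ → Type) (_ : ∀ i, Fintype (X i)) (_ : ∀ i, MulAction G (X i))
        (f : ∀ i, X i → X (i + 1)),
        (∀ (i : ℕ) (g : G) (x : X i), f i (g • x) = g • f i x) →
        phiSlice S X f ≤ phiSlice T X f) ↔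
      ∃ g : G, ∀ i, T i ≤ sliceConj g S i) ∧
    ((∀ (X : ℕ → Type) (_ : ∀ i, Fintype (X i)) (_ : ∀ i, MulAction G (X i))
        (f : ∀ i, X i → X (i + 1)),
        (∀ (i : ℕ) (g : G) (x : X i), f i (g • x) = g • f i x) →
        phiSlice S X f = phiSlice T X f) ↔
      ∃ g : G, sliceConj g S = T) := by
  constructor
  · constructor
    · exact exists_subconj S T hS
    · rintro ⟨g, hg⟩ X instF instA f hf
      letI := instF; letI := instA
      exact phi_mono S T g hg X f hf
  · constructor
    · intro h
      obtain ⟨g, hg⟩ := exists_subconj S T hS fun X iF iA f hf => (h X iF iA f hf).le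
      obtain ⟨k, hk⟩ := exists_subconj T S hT fun X iF iA f hf => (h X iF iA f hf).ge
      refine ⟨g, funext fun i => ?_⟩
      have h1 : T i ≤ sliceConj g S i := hg i
      have h2 : S i ≤ sliceConj k T i := hk i
      have c1 : Nat.card (sliceConj g S i) = Nat.card (S i) :=
        Nat.card_congr ((Subgroup.equivMapOfInjective (S i) (MulAut.conj g).toMonoidHom
          (MulAut.conj g).injective).symm.toEquiv)
      have c2 : Nat.card (sliceConj k T i) = Nat.card (T i) :=
        Nat.card_congr ((Subgroup.equivMapOfInjective (T i) (MulAut.conj k).toMonoidHom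
          (MulAut.conj k).injective).symm.toEquiv)
      have le1 : Nat.card (T i) ≤ Nat.card (sliceConj g S i) := Subgroup.card_le_of_le h1
      have le2 : Nat.card (S i) ≤ Nat.card (sliceConj k T i) := Subgroup.card_le_of_le h2
      have hcard : Nat.card (sliceConj g S i) ≤ Nat.card (T i) := by omega
      have hsub : (↑(T i) : Set G) ⊆ ↑(sliceConj g S i) := h1
      have hncard : (↑(sliceConj g S i) : Set G).ncard ≤ (↑(T i) : Set G).ncard := by
        rw [← Nat.card_coe_set_eq, ← Nat.card_coe_set_eq]
        exact hcard
      exact SetLike.ext' (Set.eq_of_subset_of_ncard_le hsub hncard (Set.toFinite _)).symm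
    · rintro ⟨g, rfl⟩ X instF instA f hf
      letI := instF; letI := instA
      refine le_antisymm (phi_mono S (sliceConj g S) g (fun i => le_rfl) X f hf)
        (phi_mono (sliceConj g S) S g⁻¹ (fun i t ht => ?_) X f hf)
      rw [mem_sliceConj_iff]
      have : (g⁻¹)⁻¹ * t * g⁻¹ ∈ sliceConj g S i ↔ t ∈ S i := by
        rw [mem_sliceConj_iff]
        constructor
        · intro hh
          rwa [show g⁻¹ * ((g⁻¹)⁻¹ * t * g⁻¹) * g = t by group] at hh
        · intro hh
          rwa [show g⁻¹ * ((g⁻¹)⁻¹ * t * g⁻¹) * g = t by group]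
      exact this.mpr ht
end

section
/- Let [Π_n(G)] be a set of representatives of the conjugacy classes of n-slices of the finite group G. For each S̄ ∈ [Π_n(G)], the vector w_{S̄} ∈ ∏_{T̄ ∈ [Π_n(G)]} ℚ with T̄-coordinate m(T̄,S̄)/[N_G(S̄):S_0] has all entries in ℤ, and the family {w_{S̄} : S̄ ∈ [Π_n(G)]} is a ℤ-basis of the full product group ∏_{T̄ ∈ [Π_n(G)]} ℤ. -/
/-! The set of `g` with `g⁻¹K̄g ≤ S̄` is stable under right multiplication by `N_G(S̄)`.
Counting it by cosets of `S₀` and by cosets of `N_G(S̄)` gives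
`m(K̄,S̄) = [N_G(S̄):S₀] · #{cosets of N_G(S̄) in it}`, and for `K̄ = S̄` the set is `N_G(S̄)`
itself, so `m(S̄,S̄) = [N_G(S̄):S₀]`. If `m(T̄,S̄) ≠ 0` then a conjugate of `T̄` lies below `S̄`
termwise, so for non-conjugate slices `∑ᵢ |Tᵢ| < ∑ᵢ |Sᵢ|`. Ordered by this size, the matrix with
rows `w_S̄` is unitriangular, hence has determinant `1`, and its rows form a `ℤ`-basis. -/

variable {G : Type*}

/-- The mark `m(K̄,S̄) = |{gS₀ ∈ G/S₀ : g⁻¹Kᵢg ≤ Sᵢ for all i}|`. -/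
noncomputable def mark [Group G] {n : ℕ} (K S : Fin (n + 1) → Subgroup G) : ℕ :=
  Nat.card {x : G ⧸ S 0 //
    ∃ g : G, QuotientGroup.mk g = x ∧ ∀ i, ∀ k ∈ K i, g⁻¹ * k * g ∈ S i}

/-- The normalizer `N_G(S̄) = ⋂ᵢ N_G(Sᵢ)` of a slice. -/
def sliceNormalizer [Group G] {n : ℕ} (S : Fin (n + 1) → Subgroup G) : Subgroup G :=
  ⨅ i, Subgroup.normalizer (S i : Set G)

/-- The index `[N_G(S̄) : S₀]`. -/
noncomputable def sliceIndex [Group G] {n : ℕ} (S : Fin (n + 1) → Subgroup G) : ℕ :=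
  (S 0).relIndex (sliceNormalizer S)

namespace Matrix

theorem det_eq_one_of_unitriangular {ι R α : Type*} [Fintype ι] [DecidableEq ι] [CommRing R]
    [LinearOrder α] (M : Matrix ι ι R) (f : ι → α) (hdiag : ∀ i, M i i = 1)
    (hlt : ∀ i j, i ≠ j → M i j ≠ 0 → f j < f i) : M.det = 1 := by
  have hM : M.BlockTriangular (OrderDual.toDual ∘ f) := fun i j hij => by
    by_contra h
    have hne : i ≠ j := by rintro rfl; exact lt_irrefl _ hij
    exact lt_asymm hij (hlt i j hne h)
  rw [hM.det]
  refine Finset.prod_eq_one fun a _ => ?_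
  have hblock : M.toSquareBlock (OrderDual.toDual ∘ f) a = 1 := by
    ext ⟨i, hi⟩ ⟨j, hj⟩
    rcases eq_or_ne i j with rfl | hij
    · simp [toSquareBlock_def, hdiag]
    · have hfij : f j = f i := OrderDual.toDual.injective (hj.trans hi.symm)
      simpa [toSquareBlock_def, hij] using fun h => (hlt i j hij h).ne hfij
  rw [hblock, det_one]

theorem exists_basis_of_isUnit_det {ι R : Type*} [Fintype ι] [DecidableEq ι] [CommRing R]
    (M : Matrix ι ι R) (h : IsUnit M.det) : ∃ b : Module.Basis ι R (ι → R), ⇑b = M := by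
  have hM : (Pi.basisFun R ι).det M = M.det := Pi.basisFun_det_apply M
  obtain ⟨hli, hspan⟩ := (Module.Basis.is_basis_iff_det (Pi.basisFun R ι)).mpr (hM ▸ h)
  exact ⟨Module.Basis.mk hli hspan.ge, Module.Basis.coe_mk hli hspan.ge⟩

end Matrix

theorem QuotientGroup.card_eq_card_mul_card_image_mk [Group G] (H : Subgroup G)
    {A : Set G} (hA : ∀ a ∈ A, ∀ h ∈ H, a * h ∈ A) :
    Nat.card A = Nat.card H * Nat.card (QuotientGroup.mk '' A : Set (G ⧸ H)) := by
  have hpre : QuotientGroup.mk ⁻¹' (QuotientGroup.mk '' A : Set (G ⧸ H)) = A := by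
    rw [QuotientGroup.preimage_image_mk_eq_mul]
    refine (Set.mul_subset_iff.mpr fun a ha h hh => hA a ha h hh).antisymm fun a ha => ?_
    exact ⟨a, ha, 1, H.one_mem, mul_one a⟩
  rw [← QuotientGroup.card_preimage_mk, hpre]

section Slices

variable [Group G] {n : ℕ}

theorem sliceConj_one (S : Fin (n + 1) → Subgroup G) : sliceConj 1 S = S := by
  ext i x
  simp [sliceConj]

theorem sliceConj_mul (g h : G) (S : Fin (n + 1) → Subgroup G) :
    sliceConj (g * h) S = sliceConj g (sliceConj h S) := by
  ext i x
  simp [sliceConj, Subgroup.map_map, map_mul]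

theorem sliceConj_mono (g : G) : Monotone (sliceConj (n := n) g) :=
  fun _ _ h i => Subgroup.map_mono (h i)

theorem sliceConj_eq_self_iff {S : Fin (n + 1) → Subgroup G} {g : G} :
    sliceConj g S = S ↔ g ∈ sliceNormalizer S := by
  simp only [funext_iff, sliceConj, sliceNormalizer, Subgroup.mem_iInf,
    Subgroup.mem_normalizer_iff_map_conj_eq]
  rfl

theorem le_sliceNormalizer {S : Fin (n + 1) → Subgroup G} (hS : Monotone S) :
    S 0 ≤ sliceNormalizer S :=
  le_iInf fun i => (hS (Fin.zero_le i)).trans Subgroup.le_normalizer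

noncomputable def sliceCard (S : Fin (n + 1) → Subgroup G) : ℕ :=
  ∑ i, Nat.card (S i)

theorem sliceCard_lt_of_sliceConj_lt [Finite G] {K S : Fin (n + 1) → Subgroup G} {g : G}
    (h : sliceConj g K < S) : sliceCard K < sliceCard S := by
  have hcard (i) : Nat.card (K i) = Nat.card (sliceConj g K i) :=
    (Subgroup.card_map_of_injective (MulAut.conj g).injective).symm
  obtain ⟨hle, i, hlt⟩ := Pi.lt_def.mp h
  refine Finset.sum_lt_sum (fun j _ => (hcard j).trans_le (Subgroup.card_le_of_le (hle j)))
    ⟨i, Finset.mem_univ i, (hcard i).trans_lt ?_⟩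
  exact (Subgroup.card_le_of_le hlt.le).lt_of_ne fun heq =>
    hlt.ne (Subgroup.eq_of_le_of_card_ge hlt.le heq.ge)

theorem sliceConj_eq_of_le [Finite G] {S : Fin (n + 1) → Subgroup G} {g : G}
    (h : sliceConj g S ≤ S) : sliceConj g S = S :=
  h.eq_of_not_lt fun hlt => (sliceCard_lt_of_sliceConj_lt hlt).false

def markSet (K S : Fin (n + 1) → Subgroup G) : Set G :=
  {g : G | ∀ i, ∀ k ∈ K i, g⁻¹ * k * g ∈ S i}

theorem mem_markSet_iff {K S : Fin (n + 1) → Subgroup G} {g : G} :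
    g ∈ markSet K S ↔ sliceConj g⁻¹ K ≤ S := by
  simp only [markSet, Set.mem_ofPred_eq, Pi.le_def, sliceConj, Subgroup.map_le_iff_le_comap]
  simp [SetLike.le_def]

theorem mark_eq_card_image (K S : Fin (n + 1) → Subgroup G) :
    mark K S = Nat.card (QuotientGroup.mk '' markSet K S : Set (G ⧸ S 0)) :=
  Nat.card_congr <| Equiv.subtypeEquivRight fun _ => by
    simp only [Set.mem_image, markSet, Set.mem_ofPred_eq, and_comm]

theorem mul_mem_markSet {K S : Fin (n + 1) → Subgroup G} {a h : G} (ha : a ∈ markSet K S)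
    (hh : h ∈ sliceNormalizer S) : a * h ∈ markSet K S := by
  rw [mem_markSet_iff] at ha ⊢
  rw [mul_inv_rev, sliceConj_mul]
  calc sliceConj h⁻¹ (sliceConj a⁻¹ K) ≤ sliceConj h⁻¹ S := sliceConj_mono _ ha
    _ = S := sliceConj_eq_self_iff.mpr (inv_mem hh)

theorem markSet_self [Finite G] (S : Fin (n + 1) → Subgroup G) :
    markSet S S = sliceNormalizer S := by
  ext g
  rw [mem_markSet_iff, SetLike.mem_coe, ← inv_mem_iff, ← sliceConj_eq_self_iff]
  exact ⟨sliceConj_eq_of_le, le_of_eq⟩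

theorem card_markSet {K S : Fin (n + 1) → Subgroup G} (hS : Monotone S) :
    Nat.card (markSet K S) = Nat.card (S 0) * mark K S := by
  rw [mark_eq_card_image]
  exact QuotientGroup.card_eq_card_mul_card_image_mk _ fun a ha h hh =>
    mul_mem_markSet ha (le_sliceNormalizer hS hh)

theorem card_sliceNormalizer {S : Fin (n + 1) → Subgroup G} (hS : Monotone S) :
    Nat.card (sliceNormalizer S) = Nat.card (S 0) * sliceIndex S := by
  have h := Subgroup.relIndex_mul_relIndex ⊥ _ _ bot_le (le_sliceNormalizer hS)
  rwa [Subgroup.relIndex_bot_left, Subgroup.relIndex_bot_left, eq_comm] at h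

theorem sliceIndex_pos [Finite G] (S : Fin (n + 1) → Subgroup G) : 0 < sliceIndex S :=
  Nat.pos_of_ne_zero Subgroup.index_ne_zero_of_finite

theorem mark_eq_sliceIndex_mul [Finite G] (K : Fin (n + 1) → Subgroup G)
    {S : Fin (n + 1) → Subgroup G} (hS : Monotone S) :
    mark K S = sliceIndex S *
      Nat.card (QuotientGroup.mk '' markSet K S : Set (G ⧸ sliceNormalizer S)) := by
  have h := card_markSet (K := K) hS
  rw [QuotientGroup.card_eq_card_mul_card_image_mk _ fun a ha h hh => mul_mem_markSet ha hh,
    card_sliceNormalizer hS, mul_assoc] at h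
  exact (Nat.eq_of_mul_eq_mul_left Nat.card_pos h).symm

theorem sliceIndex_dvd_mark [Finite G] (K : Fin (n + 1) → Subgroup G)
    {S : Fin (n + 1) → Subgroup G} (hS : Monotone S) : sliceIndex S ∣ mark K S :=
  Dvd.intro _ (mark_eq_sliceIndex_mul K hS).symm

theorem mark_self [Finite G] {S : Fin (n + 1) → Subgroup G} (hS : Monotone S) :
    mark S S = sliceIndex S := by
  have h := card_markSet (K := S) hS
  rw [markSet_self, SetLike.coe_sort_coe, card_sliceNormalizer hS] at h
  exact Nat.eq_of_mul_eq_mul_left Nat.card_pos h.symm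

theorem sliceCard_lt_of_mark_ne_zero [Finite G] {K S : Fin (n + 1) → Subgroup G}
    (h : mark K S ≠ 0) (hconj : ∀ g : G, sliceConj g K ≠ S) : sliceCard K < sliceCard S := by
  rw [mark_eq_card_image] at h
  obtain ⟨⟨_, g, hg, -⟩⟩ := (Nat.card_ne_zero.mp h).1
  exact sliceCard_lt_of_sliceConj_lt ((mem_markSet_iff.mp hg).lt_of_ne (hconj g⁻¹))

end Slices

/-- the vectors `w_{S̄}` with `T̄`-coordinate `m(T̄,S̄)/[N_G(S̄):S₀]`
have integer entries and form a `ℤ`-basis of the full product `∏_{T̄} ℤ`. -/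
theorem marks_div_basis {n : ℕ} [Group G] [Finite G]
    (R : Finset {S : Fin (n + 1) → Subgroup G // Monotone S})
    (hR : ∀ S : {S : Fin (n + 1) → Subgroup G // Monotone S},
      ∃! T, T ∈ R ∧ ∃ g : G, sliceConj g S.1 = T.1) :
    (∀ S T : R, sliceIndex S.1.1 ∣ mark T.1.1 S.1.1) ∧
    ∃ b : Module.Basis R ℤ (R → ℤ), ∀ S T : R,
      b S T = ((mark T.1.1 S.1.1 / sliceIndex S.1.1 : ℕ) : ℤ) := by
  classical
  refine ⟨fun S T => sliceIndex_dvd_mark _ S.1.2, ?_⟩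
  let W : Matrix R R ℤ := fun S T => ((mark T.1.1 S.1.1 / sliceIndex S.1.1 : ℕ) : ℤ)
  have not_conj (S T : R) (hST : S ≠ T) (g : G) : sliceConj g T.1.1 ≠ S.1.1 := fun h =>
    hST <| Subtype.ext <| (hR T.1).unique ⟨S.2, g, h⟩ ⟨T.2, 1, sliceConj_one _⟩
  have hdet : W.det = 1 := by
    refine W.det_eq_one_of_unitriangular (fun S => sliceCard S.1.1) (fun S => ?_)
      fun S T hST hW => sliceCard_lt_of_mark_ne_zero (fun h => hW ?_) (not_conj S T hST)
    · simp only [W, mark_self S.1.2, Nat.div_self (sliceIndex_pos _), Nat.cast_one]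
    · simp [W, h]
  obtain ⟨b, hb⟩ := W.exists_basis_of_isUnit_det (hdet ▸ isUnit_one)
  exact ⟨b, fun S T => by rw [hb]⟩
end
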